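/- arXiv:2004.07861 — 7 statements merged into one kernel-verified Lean document; each statement's English description precedes it below -/
import Mathlib

section
/- Let α^{c,c}, α^{c,a}, α^{a,c}, α^{a,a} > 0 and β^{c,c}, β^{c,a}, β^{a,c}, β^{a,a} > 0, and let 0 = A_0^c ≤ ⋯ ≤ A_{n_c}^c ≤ t and 0 ≤ A_1^a ≤ ⋯ ≤ A_{n_a}^a ≤ t be customer and agent message times. Then the improper integral ∫_t^∞ (λ_s^c + λ_s^a) ds converges and equals Σ_{i=0}^{n_c} (α^{c,c}/β^{c,c}) e^{−β^{c,c}(t−A_i^c)} + Σ_{j=1}^{n_a} (α^{c,a}/β^{c,a}) e^{−β^{c,a}(t−A_j^a)} + Σ_{i=0}^{n_c} (α^{a,c}/β^{a,c}) e^{−β^{a,c}(t−A_i^c)} + Σ_{j=1}^{n_a} (α^{a,a}/β^{a,a}) e^{−β^{a,a}(t−A_j^a)}. Consequently the probability of no more messages at all after time t in the BHP conversation model equals exp of minus this sum (Proposition 2, BHP case). -/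
open MeasureTheory Filter Set Real

theorem mul_exp_neg_mul_sub (a b A s : ℝ) :
    a * exp (-b * (s - A)) = a * exp (b * A) * exp (-b * s) := by
  rw [mul_assoc, ← exp_add]
  ring_nf

section ExpKernel

variable {b : ℝ} (hb : 0 < b) (a t : ℝ)
include hb

theorem integrableOn_exp_kernel_Ioi (A : ℝ) :
    IntegrableOn (fun s => a * exp (-b * (s - A))) (Ioi t) := by
  simp only [mul_exp_neg_mul_sub]
  exact (integrableOn_exp_mul_Ioi (neg_neg_of_pos hb) t).const_mul _

theorem integral_exp_kernel_Ioi (A : ℝ) :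
    ∫ s in Ioi t, a * exp (-b * (s - A)) = a / b * exp (-b * (t - A)) := by
  simp only [mul_exp_neg_mul_sub, integral_const_mul, integral_exp_mul_Ioi (neg_neg_of_pos hb)]
  field_simp

theorem integrableOn_sum_exp_kernel_Ioi {ι : Type*} (S : Finset ι) (A : ι → ℝ) :
    IntegrableOn (fun s => ∑ i ∈ S, a * exp (-b * (s - A i))) (Ioi t) :=
  integrable_finsetSum S fun i _ => integrableOn_exp_kernel_Ioi hb a t (A i)

theorem integral_sum_exp_kernel_Ioi {ι : Type*} (S : Finset ι) (A : ι → ℝ) :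
    ∫ s in Ioi t, ∑ i ∈ S, a * exp (-b * (s - A i)) = ∑ i ∈ S, a / b * exp (-b * (t - A i)) := by
  rw [integral_finsetSum S fun i _ => integrableOn_exp_kernel_Ioi hb a t (A i)]
  exact Finset.sum_congr rfl fun i _ => integral_exp_kernel_Ioi hb a t (A i)

end ExpKernel

theorem bhp_no_more_messages_general
    (acc aca aac aaa bcc bca bac baa : ℝ)
    (hbcc : 0 < bcc) (hbca : 0 < bca) (hbac : 0 < bac) (hbaa : 0 < baa)
    (nc na : ℕ) (Ac Aa : ℕ → ℝ) (t : ℝ) :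
    IntegrableOn (fun s =>
        ((∑ i ∈ Finset.range (nc + 1), acc * Real.exp (-bcc * (s - Ac i)))
          + (∑ j ∈ Finset.Icc 1 na, aca * Real.exp (-bca * (s - Aa j))))
        + ((∑ i ∈ Finset.range (nc + 1), aac * Real.exp (-bac * (s - Ac i)))
          + (∑ j ∈ Finset.Icc 1 na, aaa * Real.exp (-baa * (s - Aa j))))) (Set.Ioi t)
    ∧ (∫ s in Set.Ioi t,
        ((∑ i ∈ Finset.range (nc + 1), acc * Real.exp (-bcc * (s - Ac i)))
          + (∑ j ∈ Finset.Icc 1 na, aca * Real.exp (-bca * (s - Aa j))))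
        + ((∑ i ∈ Finset.range (nc + 1), aac * Real.exp (-bac * (s - Ac i)))
          + (∑ j ∈ Finset.Icc 1 na, aaa * Real.exp (-baa * (s - Aa j)))))
      = ((∑ i ∈ Finset.range (nc + 1), acc / bcc * Real.exp (-bcc * (t - Ac i)))
        + (∑ j ∈ Finset.Icc 1 na, aca / bca * Real.exp (-bca * (t - Aa j)))
        + (∑ i ∈ Finset.range (nc + 1), aac / bac * Real.exp (-bac * (t - Ac i)))
        + (∑ j ∈ Finset.Icc 1 na, aaa / baa * Real.exp (-baa * (t - Aa j))))
    ∧ Real.exp (-(∫ s in Set.Ioi t,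
        ((∑ i ∈ Finset.range (nc + 1), acc * Real.exp (-bcc * (s - Ac i)))
          + (∑ j ∈ Finset.Icc 1 na, aca * Real.exp (-bca * (s - Aa j))))
        + ((∑ i ∈ Finset.range (nc + 1), aac * Real.exp (-bac * (s - Ac i)))
          + (∑ j ∈ Finset.Icc 1 na, aaa * Real.exp (-baa * (s - Aa j))))))
      = Real.exp (-((∑ i ∈ Finset.range (nc + 1), acc / bcc * Real.exp (-bcc * (t - Ac i)))
        + (∑ j ∈ Finset.Icc 1 na, aca / bca * Real.exp (-bca * (t - Aa j)))
        + (∑ i ∈ Finset.range (nc + 1), aac / bac * Real.exp (-bac * (t - Ac i)))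
        + (∑ j ∈ Finset.Icc 1 na, aaa / baa * Real.exp (-baa * (t - Aa j))))) := by
  have hcc := integrableOn_sum_exp_kernel_Ioi hbcc acc t (Finset.range (nc + 1)) Ac
  have hca := integrableOn_sum_exp_kernel_Ioi hbca aca t (Finset.Icc 1 na) Aa
  have hac := integrableOn_sum_exp_kernel_Ioi hbac aac t (Finset.range (nc + 1)) Ac
  have haa := integrableOn_sum_exp_kernel_Ioi hbaa aaa t (Finset.Icc 1 na) Aa
  have hcustomer := hcc.fun_add hca
  have hagent := hac.fun_add haa
  have hintegral := integral_add hcustomer hagent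
  rw [integral_add hcc hca, integral_add hac haa, integral_sum_exp_kernel_Ioi hbcc,
    integral_sum_exp_kernel_Ioi hbca, integral_sum_exp_kernel_Ioi hbac,
    integral_sum_exp_kernel_Ioi hbaa, ← add_assoc] at hintegral
  exact ⟨hcustomer.fun_add hagent, hintegral, by rw [hintegral]⟩

theorem bhp_no_more_messages
    (acc aca aac aaa bcc bca bac baa : ℝ)
    (hacc : 0 < acc) (haca : 0 < aca) (haac : 0 < aac) (haaa : 0 < aaa)
    (hbcc : 0 < bcc) (hbca : 0 < bca) (hbac : 0 < bac) (hbaa : 0 < baa)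
    (nc na : ℕ) (Ac Aa : ℕ → ℝ) (t : ℝ)
    (hAc0 : Ac 0 = 0)
    (hAcmono : ∀ i < nc, Ac i ≤ Ac (i + 1))
    (hAct : Ac nc ≤ t)
    (hAa1 : 1 ≤ na → 0 ≤ Aa 1)
    (hAamono : ∀ j, 1 ≤ j → j < na → Aa j ≤ Aa (j + 1))
    (hAat : 1 ≤ na → Aa na ≤ t) :
    IntegrableOn (fun s =>
        ((∑ i ∈ Finset.range (nc + 1), acc * Real.exp (-bcc * (s - Ac i)))
          + (∑ j ∈ Finset.Icc 1 na, aca * Real.exp (-bca * (s - Aa j))))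
        + ((∑ i ∈ Finset.range (nc + 1), aac * Real.exp (-bac * (s - Ac i)))
          + (∑ j ∈ Finset.Icc 1 na, aaa * Real.exp (-baa * (s - Aa j))))) (Set.Ioi t)
    ∧ (∫ s in Set.Ioi t,
        ((∑ i ∈ Finset.range (nc + 1), acc * Real.exp (-bcc * (s - Ac i)))
          + (∑ j ∈ Finset.Icc 1 na, aca * Real.exp (-bca * (s - Aa j))))
        + ((∑ i ∈ Finset.range (nc + 1), aac * Real.exp (-bac * (s - Ac i)))
          + (∑ j ∈ Finset.Icc 1 na, aaa * Real.exp (-baa * (s - Aa j)))))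
      = ((∑ i ∈ Finset.range (nc + 1), acc / bcc * Real.exp (-bcc * (t - Ac i)))
        + (∑ j ∈ Finset.Icc 1 na, aca / bca * Real.exp (-bca * (t - Aa j)))
        + (∑ i ∈ Finset.range (nc + 1), aac / bac * Real.exp (-bac * (t - Ac i)))
        + (∑ j ∈ Finset.Icc 1 na, aaa / baa * Real.exp (-baa * (t - Aa j))))
    ∧ Real.exp (-(∫ s in Set.Ioi t,
        ((∑ i ∈ Finset.range (nc + 1), acc * Real.exp (-bcc * (s - Ac i)))
          + (∑ j ∈ Finset.Icc 1 na, aca * Real.exp (-bca * (s - Aa j))))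
        + ((∑ i ∈ Finset.range (nc + 1), aac * Real.exp (-bac * (s - Ac i)))
          + (∑ j ∈ Finset.Icc 1 na, aaa * Real.exp (-baa * (s - Aa j))))))
      = Real.exp (-((∑ i ∈ Finset.range (nc + 1), acc / bcc * Real.exp (-bcc * (t - Ac i)))
        + (∑ j ∈ Finset.Icc 1 na, aca / bca * Real.exp (-bca * (t - Aa j)))
        + (∑ i ∈ Finset.range (nc + 1), aac / bac * Real.exp (-bac * (t - Ac i)))
        + (∑ j ∈ Finset.Icc 1 na, aaa / baa * Real.exp (-baa * (t - Aa j))))) :=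
  bhp_no_more_messages_general acc aca aac aaa bcc bca bac baa hbcc hbca hbac hbaa nc na Ac Aa t
end

section
/- Let α^{c,c}, α^{c,a}, α^{a,c}, α^{a,a} > 0 and β^{c,c}, β^{c,a}, β^{a,c}, β^{a,a} > 0, let k > 0 be the concurrency factor, and let 0 = A_0^c ≤ ⋯ ≤ A_{n_c}^c ≤ t and 0 ≤ A_1^a ≤ ⋯ ≤ A_{n_a}^a ≤ t be customer and agent message times with positive weights g_i^c (i = 0,…,n_c) and g_j^a (j = 1,…,n_a). Then the improper integral ∫_t^∞ (λ_s^c + λ_s^a) ds converges and equals Σ_{i=0}^{n_c} (α^{c,c}/β^{c,c}) g_i^c e^{−β^{c,c}(t−A_i^c)} + Σ_{j=1}^{n_a} (α^{c,a}/β^{c,a}) g_j^a e^{−β^{c,a}(t−A_j^a)} + Σ_{i=0}^{n_c} (α^{a,c}/β^{a,c}) g_i^c e^{−β^{a,c} k (t−A_i^c)} + Σ_{j=1}^{n_a} (α^{a,a}/β^{a,a}) g_j^a e^{−β^{a,a} k (t−A_j^a)}. Consequently the probability of no more messages at all after time t in the SyBHP conversation model equals exp of minus this sum (Proposition 2, SyBHP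 case). -/
open MeasureTheory Filter

lemma aux_exp_int (b : ℝ) (hb : 0 < b) (a g c t : ℝ) :
    IntegrableOn (fun s => a * g * Real.exp (-b * (s - c))) (Set.Ioi t) ∧
    ∫ s in Set.Ioi t, a * g * Real.exp (-b * (s - c))
      = a / b * g * Real.exp (-b * (t - c)) := by
  have hfun : ∀ s : ℝ, a * g * Real.exp (-b * (s - c))
      = (a * g * Real.exp (b * c)) * Real.exp (-b * s) := by
    intro s
    have h : -b * (s - c) = b * c + -b * s := by ring
    rw [h, Real.exp_add]; ring
  have heq : (fun s => a * g * Real.exp (-b * (s - c)))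
      = fun s => (a * g * Real.exp (b * c)) * Real.exp (-b * s) := funext hfun
  have h2 : ∫ s in Set.Ioi t, Real.exp (-b * s) = b⁻¹ * Real.exp (-(b * t)) := by
    have h3 := integral_comp_mul_left_Ioi (fun x => Real.exp (-x)) t hb
    simp only [smul_eq_mul] at h3
    simp only [neg_mul]
    rw [h3, integral_exp_neg_Ioi]
  constructor
  · rw [heq]
    exact (exp_neg_integrableOn_Ioi t hb).const_mul _
  · rw [heq, MeasureTheory.integral_const_mul, h2,
      show -b * (t - c) = b * c + -(b * t) by ring, Real.exp_add]
    field_simp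

theorem sybhp_no_more_messages
    (acc aca aac aaa bcc bca bac baa : ℝ)
    (hacc : 0 < acc) (haca : 0 < aca) (haac : 0 < aac) (haaa : 0 < aaa)
    (hbcc : 0 < bcc) (hbca : 0 < bca) (hbac : 0 < bac) (hbaa : 0 < baa)
    (k : ℝ) (hk : 0 < k)
    (nc na : ℕ) (Ac Aa : ℕ → ℝ) (t : ℝ)
    (hAc0 : Ac 0 = 0)
    (hAcmono : ∀ i < nc, Ac i ≤ Ac (i + 1))
    (hAct : Ac nc ≤ t)
    (hAa1 : 1 ≤ na → 0 ≤ Aa 1)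
    (hAamono : ∀ j, 1 ≤ j → j < na → Aa j ≤ Aa (j + 1))
    (hAat : 1 ≤ na → Aa na ≤ t)
    (gc ga : ℕ → ℝ)
    (hgc : ∀ i ≤ nc, 0 < gc i)
    (hga : ∀ j, 1 ≤ j → j ≤ na → 0 < ga j) :
    IntegrableOn (fun s =>
        ((∑ i ∈ Finset.range (nc + 1), acc * gc i * Real.exp (-bcc * (s - Ac i)))
          + (∑ j ∈ Finset.Icc 1 na, aca * ga j * Real.exp (-bca * (s - Aa j))))
        + ((∑ i ∈ Finset.range (nc + 1), aac * k * gc i * Real.exp (-bac * k * (s - Ac i)))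
          + (∑ j ∈ Finset.Icc 1 na, aaa * k * ga j * Real.exp (-baa * k * (s - Aa j))))) (Set.Ioi t)
    ∧ (∫ s in Set.Ioi t,
        ((∑ i ∈ Finset.range (nc + 1), acc * gc i * Real.exp (-bcc * (s - Ac i)))
          + (∑ j ∈ Finset.Icc 1 na, aca * ga j * Real.exp (-bca * (s - Aa j))))
        + ((∑ i ∈ Finset.range (nc + 1), aac * k * gc i * Real.exp (-bac * k * (s - Ac i)))
          + (∑ j ∈ Finset.Icc 1 na, aaa * k * ga j * Real.exp (-baa * k * (s - Aa j)))))
      = ((∑ i ∈ Finset.range (nc + 1), acc / bcc * gc i * Real.exp (-bcc * (t - Ac i)))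
        + (∑ j ∈ Finset.Icc 1 na, aca / bca * ga j * Real.exp (-bca * (t - Aa j)))
        + (∑ i ∈ Finset.range (nc + 1), aac / bac * gc i * Real.exp (-bac * k * (t - Ac i)))
        + (∑ j ∈ Finset.Icc 1 na, aaa / baa * ga j * Real.exp (-baa * k * (t - Aa j))))
    ∧ Real.exp (-(∫ s in Set.Ioi t,
        ((∑ i ∈ Finset.range (nc + 1), acc * gc i * Real.exp (-bcc * (s - Ac i)))
          + (∑ j ∈ Finset.Icc 1 na, aca * ga j * Real.exp (-bca * (s - Aa j))))
        + ((∑ i ∈ Finset.range (nc + 1), aac * k * gc i * Real.exp (-bac * k * (s - Ac i)))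
          + (∑ j ∈ Finset.Icc 1 na, aaa * k * ga j * Real.exp (-baa * k * (s - Aa j))))))
      = Real.exp (-((∑ i ∈ Finset.range (nc + 1), acc / bcc * gc i * Real.exp (-bcc * (t - Ac i)))
        + (∑ j ∈ Finset.Icc 1 na, aca / bca * ga j * Real.exp (-bca * (t - Aa j)))
        + (∑ i ∈ Finset.range (nc + 1), aac / bac * gc i * Real.exp (-bac * k * (t - Ac i)))
        + (∑ j ∈ Finset.Icc 1 na, aaa / baa * ga j * Real.exp (-baa * k * (t - Aa j))))) := by
  have hbacK : 0 < bac * k := mul_pos hbac hk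
  have hbaaK : 0 < baa * k := mul_pos hbaa hk
  have hexp1 : ∀ (i : ℕ) (s : ℝ), (-bac * k * (s - Ac i) : ℝ) = -(bac * k) * (s - Ac i) := by
    intros; ring
  have hexp2 : ∀ (j : ℕ) (s : ℝ), (-baa * k * (s - Aa j) : ℝ) = -(baa * k) * (s - Aa j) := by
    intros; ring
  have it3 : ∀ i, IntegrableOn (fun s => aac * k * gc i * Real.exp (-bac * k * (s - Ac i)))
      (Set.Ioi t) := by
    intro i
    have h := (aux_exp_int (bac * k) hbacK (aac * k) (gc i) (Ac i) t).1
    simp only [← hexp1] at h; exact h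
  have it4 : ∀ j, IntegrableOn (fun s => aaa * k * ga j * Real.exp (-baa * k * (s - Aa j)))
      (Set.Ioi t) := by
    intro j
    have h := (aux_exp_int (baa * k) hbaaK (aaa * k) (ga j) (Aa j) t).1
    simp only [← hexp2] at h; exact h
  have int1 : IntegrableOn (fun s => ∑ i ∈ Finset.range (nc + 1),
      acc * gc i * Real.exp (-bcc * (s - Ac i))) (Set.Ioi t) :=
    integrable_finset_sum _ (fun i _ => (aux_exp_int bcc hbcc acc (gc i) (Ac i) t).1)
  have int2 : IntegrableOn (fun s => ∑ j ∈ Finset.Icc 1 na,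
      aca * ga j * Real.exp (-bca * (s - Aa j))) (Set.Ioi t) :=
    integrable_finset_sum _ (fun j _ => (aux_exp_int bca hbca aca (ga j) (Aa j) t).1)
  have int3 : IntegrableOn (fun s => ∑ i ∈ Finset.range (nc + 1),
      aac * k * gc i * Real.exp (-bac * k * (s - Ac i))) (Set.Ioi t) :=
    integrable_finset_sum _ (fun i _ => it3 i)
  have int4 : IntegrableOn (fun s => ∑ j ∈ Finset.Icc 1 na,
      aaa * k * ga j * Real.exp (-baa * k * (s - Aa j))) (Set.Ioi t) :=
    integrable_finset_sum _ (fun j _ => it4 j)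
  have int12 : IntegrableOn (fun s =>
      (∑ i ∈ Finset.range (nc + 1), acc * gc i * Real.exp (-bcc * (s - Ac i)))
        + (∑ j ∈ Finset.Icc 1 na, aca * ga j * Real.exp (-bca * (s - Aa j)))) (Set.Ioi t) :=
    int1.add int2
  have int34 : IntegrableOn (fun s =>
      (∑ i ∈ Finset.range (nc + 1), aac * k * gc i * Real.exp (-bac * k * (s - Ac i)))
        + (∑ j ∈ Finset.Icc 1 na, aaa * k * ga j * Real.exp (-baa * k * (s - Aa j)))) (Set.Ioi t) :=
    int3.add int4
  have hint : IntegrableOn (fun s =>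
        ((∑ i ∈ Finset.range (nc + 1), acc * gc i * Real.exp (-bcc * (s - Ac i)))
          + (∑ j ∈ Finset.Icc 1 na, aca * ga j * Real.exp (-bca * (s - Aa j))))
        + ((∑ i ∈ Finset.range (nc + 1), aac * k * gc i * Real.exp (-bac * k * (s - Ac i)))
          + (∑ j ∈ Finset.Icc 1 na, aaa * k * ga j * Real.exp (-baa * k * (s - Aa j))))) (Set.Ioi t) :=
    int12.add int34
  have e3 : ∀ i, (∫ s in Set.Ioi t, aac * k * gc i * Real.exp (-bac * k * (s - Ac i)))
      = aac / bac * gc i * Real.exp (-bac * k * (t - Ac i)) := by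
    intro i
    have h := (aux_exp_int (bac * k) hbacK (aac * k) (gc i) (Ac i) t).2
    simp only [← hexp1] at h
    rw [h, mul_div_mul_right _ _ hk.ne']
  have e4 : ∀ j, (∫ s in Set.Ioi t, aaa * k * ga j * Real.exp (-baa * k * (s - Aa j)))
      = aaa / baa * ga j * Real.exp (-baa * k * (t - Aa j)) := by
    intro j
    have h := (aux_exp_int (baa * k) hbaaK (aaa * k) (ga j) (Aa j) t).2
    simp only [← hexp2] at h
    rw [h, mul_div_mul_right _ _ hk.ne']
  have key : (∫ s in Set.Ioi t,
        ((∑ i ∈ Finset.range (nc + 1), acc * gc i * Real.exp (-bcc * (s - Ac i)))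
          + (∑ j ∈ Finset.Icc 1 na, aca * ga j * Real.exp (-bca * (s - Aa j))))
        + ((∑ i ∈ Finset.range (nc + 1), aac * k * gc i * Real.exp (-bac * k * (s - Ac i)))
          + (∑ j ∈ Finset.Icc 1 na, aaa * k * ga j * Real.exp (-baa * k * (s - Aa j)))))
      = ((∑ i ∈ Finset.range (nc + 1), acc / bcc * gc i * Real.exp (-bcc * (t - Ac i)))
        + (∑ j ∈ Finset.Icc 1 na, aca / bca * ga j * Real.exp (-bca * (t - Aa j)))
        + (∑ i ∈ Finset.range (nc + 1), aac / bac * gc i * Real.exp (-bac * k * (t - Ac i)))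
        + (∑ j ∈ Finset.Icc 1 na, aaa / baa * ga j * Real.exp (-baa * k * (t - Aa j)))) := by
    rw [MeasureTheory.integral_add int12 int34,
      MeasureTheory.integral_add int1 int2, MeasureTheory.integral_add int3 int4,
      MeasureTheory.integral_finset_sum _ (fun i _ => (aux_exp_int bcc hbcc acc (gc i) (Ac i) t).1),
      MeasureTheory.integral_finset_sum _ (fun j _ => (aux_exp_int bca hbca aca (ga j) (Aa j) t).1),
      MeasureTheory.integral_finset_sum _ (fun i _ => it3 i),
      MeasureTheory.integral_finset_sum _ (fun j _ => it4 j),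
      Finset.sum_congr rfl (fun i _ => (aux_exp_int bcc hbcc acc (gc i) (Ac i) t).2),
      Finset.sum_congr rfl (fun j _ => (aux_exp_int bca hbca aca (ga j) (Aa j) t).2),
      Finset.sum_congr rfl (fun i _ => e3 i),
      Finset.sum_congr rfl (fun j _ => e4 j)]
    ring
  exact ⟨hint, key, by rw [key]⟩
end

section
/- Let α^{c,c}, α^{c,a}, α^{a,c}, α^{a,a} > 0 and β^{c,c}, β^{c,a}, β^{a,c}, β^{a,a} > 0, let K ≥ 1 be the agent's concurrency with concurrency factor k = f(K) > 0, for each conversation m = 1,…,K let A_{0,m}^c ≤ ⋯ ≤ A_{n_m^c,m}^c ≤ t and A_{1,m}^a ≤ ⋯ ≤ A_{n_m^a,m}^a ≤ t be its customer and agent message times with positive weights g_{i,m}^c and g_{j,m}^a, and let δ > 0. Then Σ_{m=1}^{K} ∫_t^{t+δ} (λ_{s,m}^c + λ_{s,m}^a) ds = Σ_{m=1}^{K} [ Σ_{i=0}^{n_m^c} (α^{c,c}/β^{c,c}) g_{i,m}^c (e^{−β^{c,c}(t−A_{i,m}^c)} − e^{−β^{c,c}(t+δ−A_{i,m}^c)})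 + Σ_{j=1}^{n_m^a} (α^{c,a}/β^{c,a}) g_{j,m}^a (e^{−β^{c,a}(t−A_{j,m}^a)} − e^{−β^{c,a}(t+δ−A_{j,m}^a)}) + Σ_{i=0}^{n_m^c} (α^{a,c}/β^{a,c}) g_{i,m}^c (e^{−β^{a,c} k (t−A_{i,m}^c)} − e^{−β^{a,c} k (t+δ−A_{i,m}^c)}) + Σ_{j=1}^{n_m^a} (α^{a,a}/β^{a,a}) g_{j,m}^a (e^{−β^{a,a} k (t−A_{j,m}^a)} − e^{−β^{a,a} k (t+δ−A_{j,m}^a)}) ]. Consequently, the probability that none of the agent's K conversations is active on [t, t+δ) in the SyBHP conversation model equals exp of minus this sum (Proposition 3, SyBHP case). -/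
open MeasureTheory Filter

/-!
Every summand of the intensities is an exponential kernel `c e^{-b(s-A)}` with antiderivative
`-(c/b) e^{-b(s-A)}`; for the agent kernels, with rate `b k` and amplitude `a k g`, the factor `k`
cancels in `a k / (b k)`. The identity for the integrated intensity then follows by linearity, and
the statement about the no-activity probability is its image under `x ↦ exp (-x)`.
-/

theorem integral_mul_exp_neg_mul_sub (c b A t u : ℝ) (hb : b ≠ 0) :
    ∫ s in t..u, c * Real.exp (-b * (s - A))
      = c / b * (Real.exp (-b * (t - A)) - Real.exp (-b * (u - A))) := by
  have hderiv : ∀ s, HasDerivAt (fun s => -(c / b) * Real.exp (-b * (s - A)))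
      (c * Real.exp (-b * (s - A))) s := by
    intro s
    have hlin : HasDerivAt (fun s : ℝ => -b * (s - A)) (-b) s := by
      simpa using ((hasDerivAt_id s).sub_const A).const_mul (-b)
    exact (hlin.exp.const_mul (-(c / b))).congr_deriv (by field_simp)
  rw [intervalIntegral.integral_eq_sub_of_hasDerivAt (fun s _ => hderiv s)
    (Continuous.intervalIntegrable (by fun_prop) _ _)]
  ring

theorem integral_sum_exp_decay {ι : Type*} (I : Finset ι) (a b : ℝ) (g A : ι → ℝ)
    (t u : ℝ) (hb : b ≠ 0) :
    ∫ s in t..u, ∑ i ∈ I, a * g i * Real.exp (-b * (s - A i))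
      = ∑ i ∈ I, a / b * g i * (Real.exp (-b * (t - A i)) - Real.exp (-b * (u - A i))) := by
  rw [intervalIntegral.integral_finsetSum
    fun i _ => Continuous.intervalIntegrable (by fun_prop) _ _]
  refine Finset.sum_congr rfl fun i _ => ?_
  rw [integral_mul_exp_neg_mul_sub _ _ _ _ _ hb]
  ring

theorem integral_sum_exp_decay_scaled {ι : Type*} (I : Finset ι) (a b k : ℝ) (g A : ι → ℝ)
    (t u : ℝ) (hb : b ≠ 0) (hk : k ≠ 0) :
    ∫ s in t..u, ∑ i ∈ I, a * k * g i * Real.exp (-b * k * (s - A i))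
      = ∑ i ∈ I, a / b * g i
          * (Real.exp (-b * k * (t - A i)) - Real.exp (-b * k * (u - A i))) := by
  have h := integral_sum_exp_decay I (a * k) (b * k) g A t u (mul_ne_zero hb hk)
  rw [mul_div_mul_right _ _ hk] at h
  simpa only [neg_mul, mul_assoc] using h

theorem integral_conversation_intensity {ι κ : Type*} (I : Finset ι) (J : Finset κ)
    (acc aca aac aaa bcc bca bac baa k : ℝ) (gc : ι → ℝ) (ga : κ → ℝ) (Ac : ι → ℝ)
    (Aa : κ → ℝ) (t u : ℝ)
    (hbcc : bcc ≠ 0) (hbca : bca ≠ 0) (hbac : bac ≠ 0) (hbaa : baa ≠ 0) (hk : k ≠ 0) :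
    ∫ s in t..u,
        ((∑ i ∈ I, acc * gc i * Real.exp (-bcc * (s - Ac i)))
          + (∑ j ∈ J, aca * ga j * Real.exp (-bca * (s - Aa j))))
        + ((∑ i ∈ I, aac * k * gc i * Real.exp (-bac * k * (s - Ac i)))
          + (∑ j ∈ J, aaa * k * ga j * Real.exp (-baa * k * (s - Aa j))))
      = (∑ i ∈ I, acc / bcc * gc i * (Real.exp (-bcc * (t - Ac i)) - Real.exp (-bcc * (u - Ac i))))
        + (∑ j ∈ J, aca / bca * ga j * (Real.exp (-bca * (t - Aa j)) - Real.exp (-bca * (u - Aa j))))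
        + (∑ i ∈ I, aac / bac * gc i
            * (Real.exp (-bac * k * (t - Ac i)) - Real.exp (-bac * k * (u - Ac i))))
        + (∑ j ∈ J, aaa / baa * ga j
            * (Real.exp (-baa * k * (t - Aa j)) - Real.exp (-baa * k * (u - Aa j)))) := by
  have hint : ∀ f : ℝ → ℝ, Continuous f → IntervalIntegrable f volume t u :=
    fun f hf => hf.intervalIntegrable _ _
  rw [intervalIntegral.integral_add (hint _ (by fun_prop)) (hint _ (by fun_prop)),
    intervalIntegral.integral_add (hint _ (by fun_prop)) (hint _ (by fun_prop)),
    intervalIntegral.integral_add (hint _ (by fun_prop)) (hint _ (by fun_prop)),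
    integral_sum_exp_decay I acc bcc gc Ac t u hbcc,
    integral_sum_exp_decay J aca bca ga Aa t u hbca,
    integral_sum_exp_decay_scaled I aac bac k gc Ac t u hbac hk,
    integral_sum_exp_decay_scaled J aaa baa k ga Aa t u hbaa hk, ← add_assoc]

theorem sybhp_agent_no_messages_interval_general
    (acc aca aac aaa bcc bca bac baa : ℝ)
    (hbcc : 0 < bcc) (hbca : 0 < bca) (hbac : 0 < bac) (hbaa : 0 < baa)
    (k : ℝ) (hk : 0 < k)
    (K : ℕ)
    (nc na : ℕ → ℕ) (Ac Aa : ℕ → ℕ → ℝ) (t : ℝ)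
    (gc ga : ℕ → ℕ → ℝ)
    (δ : ℝ) :
    (∑ m ∈ Finset.Icc 1 K, ∫ s in t..(t + δ),
          ((∑ i ∈ Finset.range (nc m + 1), acc * gc m i * Real.exp (-bcc * (s - Ac m i)))
            + (∑ j ∈ Finset.Icc 1 (na m), aca * ga m j * Real.exp (-bca * (s - Aa m j))))
          + ((∑ i ∈ Finset.range (nc m + 1), aac * k * gc m i * Real.exp (-bac * k * (s - Ac m i)))
            + (∑ j ∈ Finset.Icc 1 (na m), aaa * k * ga m j * Real.exp (-baa * k * (s - Aa m j)))))
      = (∑ m ∈ Finset.Icc 1 K,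
        ((∑ i ∈ Finset.range (nc m + 1), acc / bcc * gc m i * (Real.exp (-bcc * (t - Ac m i)) - Real.exp (-bcc * (t + δ - Ac m i))))
          + (∑ j ∈ Finset.Icc 1 (na m), aca / bca * ga m j * (Real.exp (-bca * (t - Aa m j)) - Real.exp (-bca * (t + δ - Aa m j))))
          + (∑ i ∈ Finset.range (nc m + 1), aac / bac * gc m i * (Real.exp (-bac * k * (t - Ac m i)) - Real.exp (-bac * k * (t + δ - Ac m i))))
          + (∑ j ∈ Finset.Icc 1 (na m), aaa / baa * ga m j * (Real.exp (-baa * k * (t - Aa m j)) - Real.exp (-baa * k * (t + δ - Aa m j))))))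
    ∧ Real.exp (-(∑ m ∈ Finset.Icc 1 K, ∫ s in t..(t + δ),
          ((∑ i ∈ Finset.range (nc m + 1), acc * gc m i * Real.exp (-bcc * (s - Ac m i)))
            + (∑ j ∈ Finset.Icc 1 (na m), aca * ga m j * Real.exp (-bca * (s - Aa m j))))
          + ((∑ i ∈ Finset.range (nc m + 1), aac * k * gc m i * Real.exp (-bac * k * (s - Ac m i)))
            + (∑ j ∈ Finset.Icc 1 (na m), aaa * k * ga m j * Real.exp (-baa * k * (s - Aa m j))))))
      = Real.exp (-(∑ m ∈ Finset.Icc 1 K,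
        ((∑ i ∈ Finset.range (nc m + 1), acc / bcc * gc m i * (Real.exp (-bcc * (t - Ac m i)) - Real.exp (-bcc * (t + δ - Ac m i))))
          + (∑ j ∈ Finset.Icc 1 (na m), aca / bca * ga m j * (Real.exp (-bca * (t - Aa m j)) - Real.exp (-bca * (t + δ - Aa m j))))
          + (∑ i ∈ Finset.range (nc m + 1), aac / bac * gc m i * (Real.exp (-bac * k * (t - Ac m i)) - Real.exp (-bac * k * (t + δ - Ac m i))))
          + (∑ j ∈ Finset.Icc 1 (na m), aaa / baa * ga m j * (Real.exp (-baa * k * (t - Aa m j)) - Real.exp (-baa * k * (t + δ - Aa m j))))))) := by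
  have hsum := Finset.sum_congr (s₁ := Finset.Icc 1 K) rfl fun m _ =>
    integral_conversation_intensity (Finset.range (nc m + 1)) (Finset.Icc 1 (na m))
      acc aca aac aaa bcc bca bac baa k (gc m) (ga m) (Ac m) (Aa m) t (t + δ)
      hbcc.ne' hbca.ne' hbac.ne' hbaa.ne' hk.ne'
  exact ⟨hsum, by rw [hsum]⟩

theorem sybhp_agent_no_messages_interval
    (acc aca aac aaa bcc bca bac baa : ℝ)
    (hacc : 0 < acc) (haca : 0 < aca) (haac : 0 < aac) (haaa : 0 < aaa)
    (hbcc : 0 < bcc) (hbca : 0 < bca) (hbac : 0 < bac) (hbaa : 0 < baa)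
    (k : ℝ) (hk : 0 < k)
    (K : ℕ) (hK : 1 ≤ K)
    (nc na : ℕ → ℕ) (Ac Aa : ℕ → ℕ → ℝ) (t : ℝ)
    (hAcmono : ∀ m ∈ Finset.Icc 1 K, ∀ i < nc m, Ac m i ≤ Ac m (i + 1))
    (hAct : ∀ m ∈ Finset.Icc 1 K, Ac m (nc m) ≤ t)
    (hAamono : ∀ m ∈ Finset.Icc 1 K, ∀ j, 1 ≤ j → j < na m → Aa m j ≤ Aa m (j + 1))
    (hAat : ∀ m ∈ Finset.Icc 1 K, 1 ≤ na m → Aa m (na m) ≤ t)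
    (gc ga : ℕ → ℕ → ℝ)
    (hgc : ∀ m ∈ Finset.Icc 1 K, ∀ i ≤ nc m, 0 < gc m i)
    (hga : ∀ m ∈ Finset.Icc 1 K, ∀ j, 1 ≤ j → j ≤ na m → 0 < ga m j)
    (δ : ℝ) (hδ : 0 < δ) :
    (∑ m ∈ Finset.Icc 1 K, ∫ s in t..(t + δ),
          ((∑ i ∈ Finset.range (nc m + 1), acc * gc m i * Real.exp (-bcc * (s - Ac m i)))
            + (∑ j ∈ Finset.Icc 1 (na m), aca * ga m j * Real.exp (-bca * (s - Aa m j))))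
          + ((∑ i ∈ Finset.range (nc m + 1), aac * k * gc m i * Real.exp (-bac * k * (s - Ac m i)))
            + (∑ j ∈ Finset.Icc 1 (na m), aaa * k * ga m j * Real.exp (-baa * k * (s - Aa m j)))))
      = (∑ m ∈ Finset.Icc 1 K,
        ((∑ i ∈ Finset.range (nc m + 1), acc / bcc * gc m i * (Real.exp (-bcc * (t - Ac m i)) - Real.exp (-bcc * (t + δ - Ac m i))))
          + (∑ j ∈ Finset.Icc 1 (na m), aca / bca * ga m j * (Real.exp (-bca * (t - Aa m j)) - Real.exp (-bca * (t + δ - Aa m j))))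
          + (∑ i ∈ Finset.range (nc m + 1), aac / bac * gc m i * (Real.exp (-bac * k * (t - Ac m i)) - Real.exp (-bac * k * (t + δ - Ac m i))))
          + (∑ j ∈ Finset.Icc 1 (na m), aaa / baa * ga m j * (Real.exp (-baa * k * (t - Aa m j)) - Real.exp (-baa * k * (t + δ - Aa m j))))))
    ∧ Real.exp (-(∑ m ∈ Finset.Icc 1 K, ∫ s in t..(t + δ),
          ((∑ i ∈ Finset.range (nc m + 1), acc * gc m i * Real.exp (-bcc * (s - Ac m i)))
            + (∑ j ∈ Finset.Icc 1 (na m), aca * ga m j * Real.exp (-bca * (s - Aa m j))))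
          + ((∑ i ∈ Finset.range (nc m + 1), aac * k * gc m i * Real.exp (-bac * k * (s - Ac m i)))
            + (∑ j ∈ Finset.Icc 1 (na m), aaa * k * ga m j * Real.exp (-baa * k * (s - Aa m j))))))
      = Real.exp (-(∑ m ∈ Finset.Icc 1 K,
        ((∑ i ∈ Finset.range (nc m + 1), acc / bcc * gc m i * (Real.exp (-bcc * (t - Ac m i)) - Real.exp (-bcc * (t + δ - Ac m i))))
          + (∑ j ∈ Finset.Icc 1 (na m), aca / bca * ga m j * (Real.exp (-bca * (t - Aa m j)) - Real.exp (-bca * (t + δ - Aa m j))))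
          + (∑ i ∈ Finset.range (nc m + 1), aac / bac * gc m i * (Real.exp (-bac * k * (t - Ac m i)) - Real.exp (-bac * k * (t + δ - Ac m i))))
          + (∑ j ∈ Finset.Icc 1 (na m), aaa / baa * ga m j * (Real.exp (-baa * k * (t - Aa m j)) - Real.exp (-baa * k * (t + δ - Aa m j))))))) :=
  sybhp_agent_no_messages_interval_general acc aca aac aaa bcc bca bac baa hbcc hbca hbac hbaa k hk
    K nc na Ac Aa t gc ga δ
end

section
/- Let α^{c,c}, α^{c,a}, α^{a,c}, α^{a,a} > 0 and β^{c,c}, β^{c,a}, β^{a,c}, β^{a,a} > 0, let K ≥ 1, and for each conversation m = 1,…,K let A_{0,m}^c ≤ ⋯ ≤ A_{n_m^c,m}^c ≤ t and A_{1,m}^a ≤ ⋯ ≤ A_{n_m^a,m}^a ≤ t be its customer and agent message times. Then Σ_{m=1}^{K} ∫_t^∞ (λ_{s,m}^c + λ_{s,m}^a) ds converges and equals Σ_{m=1}^{K} [ Σ_{i=0}^{n_m^c} (α^{c,c}/β^{c,c}) e^{−β^{c,c}(t−A_{i,m}^c)} + Σ_{j=1}^{n_m^a} (α^{c,a}/β^{c,a})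 e^{−β^{c,a}(t−A_{j,m}^a)} + Σ_{i=0}^{n_m^c} (α^{a,c}/β^{a,c}) e^{−β^{a,c}(t−A_{i,m}^c)} + Σ_{j=1}^{n_m^a} (α^{a,a}/β^{a,a}) e^{−β^{a,a}(t−A_{j,m}^a)} ]. Consequently, the probability that all of the agent's K conversations are complete at time t in the BHP conversation model equals exp of minus this sum (Proposition 4, BHP case). -/
/-! Each excitation kernel `α e^{-β(s - A)}` with `β > 0` integrates over `(t, ∞)` to
`(α / β) e^{-β(t - A)}`. Both correspondence rates are finite sums of such kernels, so the
integral is computed term by term, and the completion probability is the exponential of minus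
that sum. -/

open MeasureTheory Set Real

section ExponentialKernel

variable {b : ℝ}

theorem exp_neg_mul_sub_eq (b A s : ℝ) : exp (-b * (s - A)) = exp (b * A) * exp (-b * s) := by
  rw [← exp_add]
  ring_nf

theorem integrableOn_Ioi_mul_exp_neg_mul_sub (hb : 0 < b) (a A t : ℝ) :
    IntegrableOn (fun s => a * exp (-b * (s - A))) (Ioi t) := by
  simp_rw [exp_neg_mul_sub_eq, ← mul_assoc]
  exact (integrableOn_exp_mul_Ioi (neg_neg_of_pos hb) t).const_mul _

theorem integral_Ioi_mul_exp_neg_mul_sub (hb : 0 < b) (a A t : ℝ) :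
    ∫ s in Ioi t, a * exp (-b * (s - A)) = a / b * exp (-b * (t - A)) := by
  simp_rw [exp_neg_mul_sub_eq, ← mul_assoc]
  rw [integral_const_mul, integral_exp_mul_Ioi (neg_neg_of_pos hb)]
  field_simp

variable {ι : Type*} (S : Finset ι)

theorem integrableOn_Ioi_sum_mul_exp_neg_mul_sub (hb : 0 < b) (a : ℝ) (A : ι → ℝ) (t : ℝ) :
    IntegrableOn (fun s => ∑ i ∈ S, a * exp (-b * (s - A i))) (Ioi t) :=
  integrable_finsetSum _ fun i _ => integrableOn_Ioi_mul_exp_neg_mul_sub hb a (A i) t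

theorem integral_Ioi_sum_mul_exp_neg_mul_sub (hb : 0 < b) (a : ℝ) (A : ι → ℝ) (t : ℝ) :
    ∫ s in Ioi t, ∑ i ∈ S, a * exp (-b * (s - A i)) = ∑ i ∈ S, a / b * exp (-b * (t - A i)) := by
  rw [integral_finsetSum _ fun i _ => integrableOn_Ioi_mul_exp_neg_mul_sub hb a (A i) t]
  exact Finset.sum_congr rfl fun i _ => integral_Ioi_mul_exp_neg_mul_sub hb a (A i) t

end ExponentialKernel

section Rate

variable {a a' b b' : ℝ} (hb : 0 < b) (hb' : 0 < b') {ι κ : Type*} (S : Finset ι) (T : Finset κ)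
  (A : ι → ℝ) (B : κ → ℝ) (t : ℝ)
include hb hb'

theorem integrableOn_Ioi_rate :
    IntegrableOn (fun s =>
      (∑ i ∈ S, a * exp (-b * (s - A i))) + ∑ j ∈ T, a' * exp (-b' * (s - B j))) (Ioi t) :=
  (integrableOn_Ioi_sum_mul_exp_neg_mul_sub S hb a A t).add
    (integrableOn_Ioi_sum_mul_exp_neg_mul_sub T hb' a' B t)

theorem integral_Ioi_rate :
    ∫ s in Ioi t, (∑ i ∈ S, a * exp (-b * (s - A i))) + ∑ j ∈ T, a' * exp (-b' * (s - B j))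
      = (∑ i ∈ S, a / b * exp (-b * (t - A i))) + ∑ j ∈ T, a' / b' * exp (-b' * (t - B j)) := by
  rw [integral_add (integrableOn_Ioi_sum_mul_exp_neg_mul_sub S hb a A t)
      (integrableOn_Ioi_sum_mul_exp_neg_mul_sub T hb' a' B t),
    integral_Ioi_sum_mul_exp_neg_mul_sub S hb, integral_Ioi_sum_mul_exp_neg_mul_sub T hb']

end Rate

section Conversation

variable {acc aca aac aaa bcc bca bac baa : ℝ}
  (hbcc : 0 < bcc) (hbca : 0 < bca) (hbac : 0 < bac) (hbaa : 0 < baa)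
  {ι κ : Type*} (Sc : Finset ι) (Sa : Finset κ) (Ac : ι → ℝ) (Aa : κ → ℝ) (t : ℝ)
include hbcc hbca hbac hbaa

theorem integrableOn_Ioi_conversation_rate :
    IntegrableOn (fun s =>
      ((∑ i ∈ Sc, acc * exp (-bcc * (s - Ac i))) + (∑ j ∈ Sa, aca * exp (-bca * (s - Aa j))))
        + ((∑ i ∈ Sc, aac * exp (-bac * (s - Ac i))) + (∑ j ∈ Sa, aaa * exp (-baa * (s - Aa j)))))
      (Ioi t) :=
  (integrableOn_Ioi_rate hbcc hbca Sc Sa Ac Aa t).add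
    (integrableOn_Ioi_rate hbac hbaa Sc Sa Ac Aa t)

theorem integral_Ioi_conversation_rate :
    ∫ s in Ioi t,
      ((∑ i ∈ Sc, acc * exp (-bcc * (s - Ac i))) + (∑ j ∈ Sa, aca * exp (-bca * (s - Aa j))))
        + ((∑ i ∈ Sc, aac * exp (-bac * (s - Ac i))) + (∑ j ∈ Sa, aaa * exp (-baa * (s - Aa j))))
      = (∑ i ∈ Sc, acc / bcc * exp (-bcc * (t - Ac i)))
        + (∑ j ∈ Sa, aca / bca * exp (-bca * (t - Aa j)))
        + (∑ i ∈ Sc, aac / bac * exp (-bac * (t - Ac i)))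
        + (∑ j ∈ Sa, aaa / baa * exp (-baa * (t - Aa j))) := by
  rw [integral_add (integrableOn_Ioi_rate hbcc hbca Sc Sa Ac Aa t)
      (integrableOn_Ioi_rate hbac hbaa Sc Sa Ac Aa t),
    integral_Ioi_rate hbcc hbca, integral_Ioi_rate hbac hbaa, ← add_assoc]

end Conversation

theorem bhp_agent_no_more_messages_general
    (acc aca aac aaa bcc bca bac baa : ℝ)
    (hbcc : 0 < bcc) (hbca : 0 < bca) (hbac : 0 < bac) (hbaa : 0 < baa)
    (K : ℕ)
    (nc na : ℕ → ℕ) (Ac Aa : ℕ → ℕ → ℝ) (t : ℝ) :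
    (∀ m ∈ Finset.Icc 1 K, IntegrableOn (fun s =>
        ((∑ i ∈ Finset.range (nc m + 1), acc * Real.exp (-bcc * (s - Ac m i)))
            + (∑ j ∈ Finset.Icc 1 (na m), aca * Real.exp (-bca * (s - Aa m j))))
          + ((∑ i ∈ Finset.range (nc m + 1), aac * Real.exp (-bac * (s - Ac m i)))
            + (∑ j ∈ Finset.Icc 1 (na m), aaa * Real.exp (-baa * (s - Aa m j))))) (Set.Ioi t))
    ∧ (∑ m ∈ Finset.Icc 1 K, ∫ s in Set.Ioi t,
          ((∑ i ∈ Finset.range (nc m + 1), acc * Real.exp (-bcc * (s - Ac m i)))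
            + (∑ j ∈ Finset.Icc 1 (na m), aca * Real.exp (-bca * (s - Aa m j))))
          + ((∑ i ∈ Finset.range (nc m + 1), aac * Real.exp (-bac * (s - Ac m i)))
            + (∑ j ∈ Finset.Icc 1 (na m), aaa * Real.exp (-baa * (s - Aa m j)))))
      = (∑ m ∈ Finset.Icc 1 K,
        ((∑ i ∈ Finset.range (nc m + 1), acc / bcc * Real.exp (-bcc * (t - Ac m i)))
          + (∑ j ∈ Finset.Icc 1 (na m), aca / bca * Real.exp (-bca * (t - Aa m j)))
          + (∑ i ∈ Finset.range (nc m + 1), aac / bac * Real.exp (-bac * (t - Ac m i)))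
          + (∑ j ∈ Finset.Icc 1 (na m), aaa / baa * Real.exp (-baa * (t - Aa m j)))))
    ∧ Real.exp (-(∑ m ∈ Finset.Icc 1 K, ∫ s in Set.Ioi t,
          ((∑ i ∈ Finset.range (nc m + 1), acc * Real.exp (-bcc * (s - Ac m i)))
            + (∑ j ∈ Finset.Icc 1 (na m), aca * Real.exp (-bca * (s - Aa m j))))
          + ((∑ i ∈ Finset.range (nc m + 1), aac * Real.exp (-bac * (s - Ac m i)))
            + (∑ j ∈ Finset.Icc 1 (na m), aaa * Real.exp (-baa * (s - Aa m j))))))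
      = Real.exp (-(∑ m ∈ Finset.Icc 1 K,
        ((∑ i ∈ Finset.range (nc m + 1), acc / bcc * Real.exp (-bcc * (t - Ac m i)))
          + (∑ j ∈ Finset.Icc 1 (na m), aca / bca * Real.exp (-bca * (t - Aa m j)))
          + (∑ i ∈ Finset.range (nc m + 1), aac / bac * Real.exp (-bac * (t - Ac m i)))
          + (∑ j ∈ Finset.Icc 1 (na m), aaa / baa * Real.exp (-baa * (t - Aa m j)))))) := by
  have hsum := Finset.sum_congr (s₁ := Finset.Icc 1 K) rfl fun m _ =>
    integral_Ioi_conversation_rate (acc := acc) (aca := aca) (aac := aac) (aaa := aaa)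
      hbcc hbca hbac hbaa (Finset.range (nc m + 1)) (Finset.Icc 1 (na m)) (Ac m) (Aa m) t
  exact ⟨fun m _ => integrableOn_Ioi_conversation_rate hbcc hbca hbac hbaa _ _ (Ac m) (Aa m) t,
    hsum, congrArg (fun x => exp (-x)) hsum⟩

theorem bhp_agent_no_more_messages
    (acc aca aac aaa bcc bca bac baa : ℝ)
    (hacc : 0 < acc) (haca : 0 < aca) (haac : 0 < aac) (haaa : 0 < aaa)
    (hbcc : 0 < bcc) (hbca : 0 < bca) (hbac : 0 < bac) (hbaa : 0 < baa)
    (K : ℕ) (hK : 1 ≤ K)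
    (nc na : ℕ → ℕ) (Ac Aa : ℕ → ℕ → ℝ) (t : ℝ)
    (hAcmono : ∀ m ∈ Finset.Icc 1 K, ∀ i < nc m, Ac m i ≤ Ac m (i + 1))
    (hAct : ∀ m ∈ Finset.Icc 1 K, Ac m (nc m) ≤ t)
    (hAamono : ∀ m ∈ Finset.Icc 1 K, ∀ j, 1 ≤ j → j < na m → Aa m j ≤ Aa m (j + 1))
    (hAat : ∀ m ∈ Finset.Icc 1 K, 1 ≤ na m → Aa m (na m) ≤ t) :
    (∀ m ∈ Finset.Icc 1 K, IntegrableOn (fun s =>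
        ((∑ i ∈ Finset.range (nc m + 1), acc * Real.exp (-bcc * (s - Ac m i)))
            + (∑ j ∈ Finset.Icc 1 (na m), aca * Real.exp (-bca * (s - Aa m j))))
          + ((∑ i ∈ Finset.range (nc m + 1), aac * Real.exp (-bac * (s - Ac m i)))
            + (∑ j ∈ Finset.Icc 1 (na m), aaa * Real.exp (-baa * (s - Aa m j))))) (Set.Ioi t))
    ∧ (∑ m ∈ Finset.Icc 1 K, ∫ s in Set.Ioi t,
          ((∑ i ∈ Finset.range (nc m + 1), acc * Real.exp (-bcc * (s - Ac m i)))
            + (∑ j ∈ Finset.Icc 1 (na m), aca * Real.exp (-bca * (s - Aa m j))))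
          + ((∑ i ∈ Finset.range (nc m + 1), aac * Real.exp (-bac * (s - Ac m i)))
            + (∑ j ∈ Finset.Icc 1 (na m), aaa * Real.exp (-baa * (s - Aa m j)))))
      = (∑ m ∈ Finset.Icc 1 K,
        ((∑ i ∈ Finset.range (nc m + 1), acc / bcc * Real.exp (-bcc * (t - Ac m i)))
          + (∑ j ∈ Finset.Icc 1 (na m), aca / bca * Real.exp (-bca * (t - Aa m j)))
          + (∑ i ∈ Finset.range (nc m + 1), aac / bac * Real.exp (-bac * (t - Ac m i)))
          + (∑ j ∈ Finset.Icc 1 (na m), aaa / baa * Real.exp (-baa * (t - Aa m j)))))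
    ∧ Real.exp (-(∑ m ∈ Finset.Icc 1 K, ∫ s in Set.Ioi t,
          ((∑ i ∈ Finset.range (nc m + 1), acc * Real.exp (-bcc * (s - Ac m i)))
            + (∑ j ∈ Finset.Icc 1 (na m), aca * Real.exp (-bca * (s - Aa m j))))
          + ((∑ i ∈ Finset.range (nc m + 1), aac * Real.exp (-bac * (s - Ac m i)))
            + (∑ j ∈ Finset.Icc 1 (na m), aaa * Real.exp (-baa * (s - Aa m j))))))
      = Real.exp (-(∑ m ∈ Finset.Icc 1 K,
        ((∑ i ∈ Finset.range (nc m + 1), acc / bcc * Real.exp (-bcc * (t - Ac m i)))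
          + (∑ j ∈ Finset.Icc 1 (na m), aca / bca * Real.exp (-bca * (t - Aa m j)))
          + (∑ i ∈ Finset.range (nc m + 1), aac / bac * Real.exp (-bac * (t - Ac m i)))
          + (∑ j ∈ Finset.Icc 1 (na m), aaa / baa * Real.exp (-baa * (t - Aa m j)))))) :=
  bhp_agent_no_more_messages_general acc aca aac aaa bcc bca bac baa hbcc hbca hbac hbaa K nc na Ac
    Aa t
end

section
/- Let α^{c,c}, α^{c,a}, α^{a,c}, α^{a,a} > 0 and β^{c,c}, β^{c,a}, β^{a,c}, β^{a,a} > 0, let K ≥ 1 be the agent's concurrency with concurrency factor k = f(K) > 0, and for each conversation m = 1,…,K let A_{0,m}^c ≤ ⋯ ≤ A_{n_m^c,m}^c ≤ t and A_{1,m}^a ≤ ⋯ ≤ A_{n_m^a,m}^a ≤ t be its customer and agent message times with positive weights g_{i,m}^c and g_{j,m}^a. Then Σ_{m=1}^{K} ∫_t^∞ (λ_{s,m}^c + λ_{s,m}^a) ds converges and equals Σ_{m=1}^{K} [ Σ_{i=0}^{n_m^c} (α^{c,c}/β^{c,c}) g_{i,m}^c e^{−β^{c,c}(t−A_{i,m}^c)}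 + Σ_{j=1}^{n_m^a} (α^{c,a}/β^{c,a}) g_{j,m}^a e^{−β^{c,a}(t−A_{j,m}^a)} + Σ_{i=0}^{n_m^c} (α^{a,c}/β^{a,c}) g_{i,m}^c e^{−β^{a,c} k (t−A_{i,m}^c)} + Σ_{j=1}^{n_m^a} (α^{a,a}/β^{a,a}) g_{j,m}^a e^{−β^{a,a} k (t−A_{j,m}^a)} ]. Consequently, the probability that all of the agent's K conversations are complete at time t in the SyBHP conversation model equals exp of minus this sum (Proposition 4, SyBHP case). -/
open MeasureTheory Filter

lemma sybhp_aux_int (c b A t : ℝ) (hb : 0 < b) :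
    IntegrableOn (fun s => c * Real.exp (-b * (s - A))) (Set.Ioi t) := by
  have h : (fun s => c * Real.exp (-b * (s - A)))
      = fun s => (c * Real.exp (b * A)) * Real.exp (-b * s) := by
    funext s
    rw [mul_assoc, ← Real.exp_add]
    ring_nf
  rw [h]
  exact (exp_neg_integrableOn_Ioi t hb).const_mul _

lemma sybhp_aux_val (c b A t : ℝ) (hb : 0 < b) :
    ∫ s in Set.Ioi t, c * Real.exp (-b * (s - A)) = c / b * Real.exp (-b * (t - A)) := by
  have h : (fun s => c * Real.exp (-b * (s - A)))
      = fun s => (c * Real.exp (b * A)) * Real.exp (-(b * s)) := by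
    funext s
    rw [mul_assoc, ← Real.exp_add]
    ring_nf
  rw [h, MeasureTheory.integral_const_mul,
    MeasureTheory.integral_comp_mul_left_Ioi (fun x => Real.exp (-x)) t hb,
    integral_exp_neg_Ioi, smul_eq_mul]
  rw [show -b * (t - A) = b * A + -(b * t) by ring, Real.exp_add]
  field_simp

lemma sybhp_aux_int' (c b k A t : ℝ) (hb : 0 < b) (hk : 0 < k) :
    IntegrableOn (fun s => c * Real.exp (-b * k * (s - A))) (Set.Ioi t) := by
  have := sybhp_aux_int c (b * k) A t (mul_pos hb hk)
  simpa [neg_mul, mul_assoc] using this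

lemma sybhp_aux_val' (c b k A t : ℝ) (hb : 0 < b) (hk : 0 < k) :
    ∫ s in Set.Ioi t, c * Real.exp (-b * k * (s - A))
      = c / (b * k) * Real.exp (-b * k * (t - A)) := by
  have := sybhp_aux_val c (b * k) A t (mul_pos hb hk)
  simpa [neg_mul, mul_assoc] using this

theorem sybhp_agent_no_more_messages
    (acc aca aac aaa bcc bca bac baa : ℝ)
    (hacc : 0 < acc) (haca : 0 < aca) (haac : 0 < aac) (haaa : 0 < aaa)
    (hbcc : 0 < bcc) (hbca : 0 < bca) (hbac : 0 < bac) (hbaa : 0 < baa)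
    (k : ℝ) (hk : 0 < k)
    (K : ℕ) (hK : 1 ≤ K)
    (nc na : ℕ → ℕ) (Ac Aa : ℕ → ℕ → ℝ) (t : ℝ)
    (hAcmono : ∀ m ∈ Finset.Icc 1 K, ∀ i < nc m, Ac m i ≤ Ac m (i + 1))
    (hAct : ∀ m ∈ Finset.Icc 1 K, Ac m (nc m) ≤ t)
    (hAamono : ∀ m ∈ Finset.Icc 1 K, ∀ j, 1 ≤ j → j < na m → Aa m j ≤ Aa m (j + 1))
    (hAat : ∀ m ∈ Finset.Icc 1 K, 1 ≤ na m → Aa m (na m) ≤ t)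
    (gc ga : ℕ → ℕ → ℝ)
    (hgc : ∀ m ∈ Finset.Icc 1 K, ∀ i ≤ nc m, 0 < gc m i)
    (hga : ∀ m ∈ Finset.Icc 1 K, ∀ j, 1 ≤ j → j ≤ na m → 0 < ga m j) :
    (∀ m ∈ Finset.Icc 1 K, IntegrableOn (fun s =>
        ((∑ i ∈ Finset.range (nc m + 1), acc * gc m i * Real.exp (-bcc * (s - Ac m i)))
            + (∑ j ∈ Finset.Icc 1 (na m), aca * ga m j * Real.exp (-bca * (s - Aa m j))))
          + ((∑ i ∈ Finset.range (nc m + 1), aac * k * gc m i * Real.exp (-bac * k * (s - Ac m i)))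
            + (∑ j ∈ Finset.Icc 1 (na m), aaa * k * ga m j * Real.exp (-baa * k * (s - Aa m j))))) (Set.Ioi t))
    ∧ (∑ m ∈ Finset.Icc 1 K, ∫ s in Set.Ioi t,
          ((∑ i ∈ Finset.range (nc m + 1), acc * gc m i * Real.exp (-bcc * (s - Ac m i)))
            + (∑ j ∈ Finset.Icc 1 (na m), aca * ga m j * Real.exp (-bca * (s - Aa m j))))
          + ((∑ i ∈ Finset.range (nc m + 1), aac * k * gc m i * Real.exp (-bac * k * (s - Ac m i)))
            + (∑ j ∈ Finset.Icc 1 (na m), aaa * k * ga m j * Real.exp (-baa * k * (s - Aa m j)))))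
      = (∑ m ∈ Finset.Icc 1 K,
        ((∑ i ∈ Finset.range (nc m + 1), acc / bcc * gc m i * Real.exp (-bcc * (t - Ac m i)))
          + (∑ j ∈ Finset.Icc 1 (na m), aca / bca * ga m j * Real.exp (-bca * (t - Aa m j)))
          + (∑ i ∈ Finset.range (nc m + 1), aac / bac * gc m i * Real.exp (-bac * k * (t - Ac m i)))
          + (∑ j ∈ Finset.Icc 1 (na m), aaa / baa * ga m j * Real.exp (-baa * k * (t - Aa m j)))))
    ∧ Real.exp (-(∑ m ∈ Finset.Icc 1 K, ∫ s in Set.Ioi t,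
          ((∑ i ∈ Finset.range (nc m + 1), acc * gc m i * Real.exp (-bcc * (s - Ac m i)))
            + (∑ j ∈ Finset.Icc 1 (na m), aca * ga m j * Real.exp (-bca * (s - Aa m j))))
          + ((∑ i ∈ Finset.range (nc m + 1), aac * k * gc m i * Real.exp (-bac * k * (s - Ac m i)))
            + (∑ j ∈ Finset.Icc 1 (na m), aaa * k * ga m j * Real.exp (-baa * k * (s - Aa m j))))))
      = Real.exp (-(∑ m ∈ Finset.Icc 1 K,
        ((∑ i ∈ Finset.range (nc m + 1), acc / bcc * gc m i * Real.exp (-bcc * (t - Ac m i)))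
          + (∑ j ∈ Finset.Icc 1 (na m), aca / bca * ga m j * Real.exp (-bca * (t - Aa m j)))
          + (∑ i ∈ Finset.range (nc m + 1), aac / bac * gc m i * Real.exp (-bac * k * (t - Ac m i)))
          + (∑ j ∈ Finset.Icc 1 (na m), aaa / baa * ga m j * Real.exp (-baa * k * (t - Aa m j)))))) := by
  
  have I1 : ∀ m, IntegrableOn (fun s => ∑ i ∈ Finset.range (nc m + 1),
      acc * gc m i * Real.exp (-bcc * (s - Ac m i))) (Set.Ioi t) :=
    fun m => integrable_finset_sum _ fun i _ => sybhp_aux_int _ _ _ _ hbcc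
  have I2 : ∀ m, IntegrableOn (fun s => ∑ j ∈ Finset.Icc 1 (na m),
      aca * ga m j * Real.exp (-bca * (s - Aa m j))) (Set.Ioi t) :=
    fun m => integrable_finset_sum _ fun j _ => sybhp_aux_int _ _ _ _ hbca
  have I3 : ∀ m, IntegrableOn (fun s => ∑ i ∈ Finset.range (nc m + 1),
      aac * k * gc m i * Real.exp (-bac * k * (s - Ac m i))) (Set.Ioi t) :=
    fun m => integrable_finset_sum _ fun i _ => sybhp_aux_int' _ _ _ _ _ hbac hk
  have I4 : ∀ m, IntegrableOn (fun s => ∑ j ∈ Finset.Icc 1 (na m),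
      aaa * k * ga m j * Real.exp (-baa * k * (s - Aa m j))) (Set.Ioi t) :=
    fun m => integrable_finset_sum _ fun j _ => sybhp_aux_int' _ _ _ _ _ hbaa hk
  have hint : ∀ m ∈ Finset.Icc 1 K, IntegrableOn (fun s =>
        ((∑ i ∈ Finset.range (nc m + 1), acc * gc m i * Real.exp (-bcc * (s - Ac m i)))
            + (∑ j ∈ Finset.Icc 1 (na m), aca * ga m j * Real.exp (-bca * (s - Aa m j))))
          + ((∑ i ∈ Finset.range (nc m + 1), aac * k * gc m i * Real.exp (-bac * k * (s - Ac m i)))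
            + (∑ j ∈ Finset.Icc 1 (na m), aaa * k * ga m j * Real.exp (-baa * k * (s - Aa m j))))) (Set.Ioi t) :=
    fun m _ => ((I1 m).add (I2 m)).add ((I3 m).add (I4 m))
  have hval : (∑ m ∈ Finset.Icc 1 K, ∫ s in Set.Ioi t,
          ((∑ i ∈ Finset.range (nc m + 1), acc * gc m i * Real.exp (-bcc * (s - Ac m i)))
            + (∑ j ∈ Finset.Icc 1 (na m), aca * ga m j * Real.exp (-bca * (s - Aa m j))))
          + ((∑ i ∈ Finset.range (nc m + 1), aac * k * gc m i * Real.exp (-bac * k * (s - Ac m i)))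
            + (∑ j ∈ Finset.Icc 1 (na m), aaa * k * ga m j * Real.exp (-baa * k * (s - Aa m j)))))
      = (∑ m ∈ Finset.Icc 1 K,
        ((∑ i ∈ Finset.range (nc m + 1), acc / bcc * gc m i * Real.exp (-bcc * (t - Ac m i)))
          + (∑ j ∈ Finset.Icc 1 (na m), aca / bca * ga m j * Real.exp (-bca * (t - Aa m j)))
          + (∑ i ∈ Finset.range (nc m + 1), aac / bac * gc m i * Real.exp (-bac * k * (t - Ac m i)))
          + (∑ j ∈ Finset.Icc 1 (na m), aaa / baa * ga m j * Real.exp (-baa * k * (t - Aa m j))))) := by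
    refine Finset.sum_congr rfl fun m _ => ?_
    have hI := MeasureTheory.integral_add ((I1 m).add (I2 m)) ((I3 m).add (I4 m))
    have hI1 := MeasureTheory.integral_add (I1 m) (I2 m)
    have hI2 := MeasureTheory.integral_add (I3 m) (I4 m)
    simp only [Pi.add_apply] at hI hI1 hI2
    rw [hI, hI1, hI2,
      MeasureTheory.integral_finset_sum _ (fun i _ => sybhp_aux_int _ _ _ _ hbcc),
      MeasureTheory.integral_finset_sum _ (fun j _ => sybhp_aux_int _ _ _ _ hbca),
      MeasureTheory.integral_finset_sum _ (fun i _ => sybhp_aux_int' _ _ _ _ _ hbac hk),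
      MeasureTheory.integral_finset_sum _ (fun j _ => sybhp_aux_int' _ _ _ _ _ hbaa hk)]
    have e1 : ∀ i, ∫ s in Set.Ioi t, acc * gc m i * Real.exp (-bcc * (s - Ac m i))
        = acc / bcc * gc m i * Real.exp (-bcc * (t - Ac m i)) := by
      intro i
      rw [sybhp_aux_val _ _ _ _ hbcc]; field_simp; all_goals ring
    have e2 : ∀ j, ∫ s in Set.Ioi t, aca * ga m j * Real.exp (-bca * (s - Aa m j))
        = aca / bca * ga m j * Real.exp (-bca * (t - Aa m j)) := by
      intro j
      rw [sybhp_aux_val _ _ _ _ hbca]; field_simp; all_goals ring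
    have e3 : ∀ i, ∫ s in Set.Ioi t, aac * k * gc m i * Real.exp (-bac * k * (s - Ac m i))
        = aac / bac * gc m i * Real.exp (-bac * k * (t - Ac m i)) := by
      intro i
      rw [sybhp_aux_val' _ _ _ _ _ hbac hk]; field_simp; all_goals ring
    have e4 : ∀ j, ∫ s in Set.Ioi t, aaa * k * ga m j * Real.exp (-baa * k * (s - Aa m j))
        = aaa / baa * ga m j * Real.exp (-baa * k * (t - Aa m j)) := by
      intro j
      rw [sybhp_aux_val' _ _ _ _ _ hbaa hk]; field_simp; all_goals ring
    simp only [e1, e2, e3, e4]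
    ring
  exact ⟨hint, hval, by rw [hval]⟩
end

section
/- Let α, β > 0, let A ≥ 0, let 0 = Δ_0 < Δ_1 < ⋯ < Δ_{κ−1} be partition points, and let f_1, …, f_κ > 0; define the piecewise-constant function f by f(s) = f_k for s ∈ [Δ_{k−1}, Δ_k) when k < κ and f(s) = f_κ for s ≥ Δ_{κ−1}. Then the improper integral ∫_A^∞ α f(s) e^{−β f(s)(s−A)} ds converges and equals (α/β) [ Σ_{k=1}^{κ−1} ( e^{−β f_k (Δ_{k−1}−A)^+} − e^{−β f_k (Δ_k−A)^+} ) + e^{−β f_κ (Δ_{κ−1}−A)^+} ], where x^+ = max(x, 0). -/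
/-!
On `(max(Δ_{k-1}, A), max(Δ_k, A))` the rate is the constant `f_k`, and beyond
`max(Δ_{κ-1}, A)` it is `f_κ`; clipping the partition points at `A` turns these intervals into
adjacent pieces of `(A, ∞)`. On a piece with constant rate `c` the integrand
`α c e^{-β c (s - A)}` is the derivative of `-(α/β) e^{-β c (s - A)}`, so each finite piece
contributes a difference of two exponentials and the tail, where the antiderivative vanishes
at infinity, a single one.
-/

open MeasureTheory Filter Set Real intervalIntegral

open scoped Topology

section Partition

variable {E : Type*} [NormedAddCommGroup E] {μ : Measure ℝ} {f : ℝ → E}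

theorem IntervalIntegrable.integrableOn_Ioi {a b : ℝ} (hab : IntervalIntegrable f μ a b)
    (hb : IntegrableOn f (Ioi b) μ) : IntegrableOn f (Ioi a) μ := by
  refine ((intervalIntegrable_iff.1 hab).union hb).mono_set fun x (hx : a < x) => ?_
  rcases le_or_gt x b with hxb | hbx
  · exact Or.inl ⟨min_le_left a b |>.trans_lt hx, hxb.trans (le_max_right a b)⟩
  · exact Or.inr hbx

theorem integral_Ioi_eq_sum_intervalIntegral_add [NormedSpace ℝ E] {a : ℕ → ℝ} {n : ℕ}
    (hint : ∀ k < n, IntervalIntegrable f μ (a k) (a (k + 1)))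
    (htail : IntegrableOn f (Ioi (a n)) μ) :
    ∫ x in Ioi (a 0), f x ∂μ = ∑ k ∈ Finset.range n, (∫ x in a k..a (k + 1), f x ∂μ)
      + ∫ x in Ioi (a n), f x ∂μ := by
  rw [sum_integral_adjacent_intervals hint,
    integral_interval_add_Ioi' (IntervalIntegrable.trans_iterate hint) htail]

end Partition

section ExpDecay

variable (α β c A : ℝ)

theorem hasDerivAt_exp_decay (hβ : β ≠ 0) (x : ℝ) :
    HasDerivAt (fun s => -(α / β) * exp (-β * c * (s - A)))
      (α * c * exp (-β * c * (x - A))) x := by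
  have hlin : HasDerivAt (fun s => -β * c * (s - A)) (-β * c) x := by
    simpa using ((hasDerivAt_id x).sub_const A).const_mul (-β * c)
  refine (hlin.exp.const_mul (-(α / β))).congr_deriv ?_
  field_simp

theorem integral_exp_decay (hβ : β ≠ 0) (a b : ℝ) :
    ∫ s in a..b, α * c * exp (-β * c * (s - A))
      = α / β * (exp (-β * c * (a - A)) - exp (-β * c * (b - A))) := by
  rw [integral_eq_sub_of_hasDerivAt (fun x _ => hasDerivAt_exp_decay α β c A hβ x)
    ((by fun_prop : Continuous _).intervalIntegrable _ _)]
  ring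

theorem integrableOn_Ioi_exp_decay (hβc : 0 < β * c) (M : ℝ) :
    IntegrableOn (fun s => α * c * exp (-β * c * (s - A))) (Ioi M) := by
  refine IntegrableOn.congr_fun ((exp_neg_integrableOn_Ioi M hβc).const_mul
    (α * c * exp (β * c * A))) (fun x _ => ?_) measurableSet_Ioi
  simp only [mul_assoc, ← exp_add]
  ring_nf

theorem integral_Ioi_exp_decay (hβc : 0 < β * c) (M : ℝ) :
    ∫ s in Ioi M, α * c * exp (-β * c * (s - A)) = α / β * exp (-β * c * (M - A)) := by
  have hβ : β ≠ 0 := left_ne_zero_of_mul hβc.ne'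
  have hlim : Tendsto (fun s => -(α / β) * exp (-β * c * (s - A))) atTop (𝓝 0) := by
    have : Tendsto (fun s => -β * c * (s - A)) atTop atBot :=
      (tendsto_atTop_add_const_right _ (-A) tendsto_id).const_mul_atTop_of_neg (by linarith)
    simpa using (tendsto_exp_atBot.comp this).const_mul (-(α / β))
  rw [integral_Ioi_of_hasDerivAt_of_tendsto' (fun x _ => hasDerivAt_exp_decay α β c A hβ x)
    (integrableOn_Ioi_exp_decay α β c A hβc M) hlim]
  ring

variable {α β c A}

theorem intervalIntegral_exp_decay_of_eqOn {g : ℝ → ℝ} {a b : ℝ} (hab : a ≤ b)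
    (hg : EqOn g (fun _ => c) (Ioo a b)) (hβ : β ≠ 0) :
    IntervalIntegrable (fun s => α * g s * exp (-β * g s * (s - A))) volume a b
    ∧ ∫ s in a..b, α * g s * exp (-β * g s * (s - A))
      = α / β * (exp (-β * c * (a - A)) - exp (-β * c * (b - A))) := by
  have heq : EqOn (fun s => α * g s * exp (-β * g s * (s - A)))
      (fun s => α * c * exp (-β * c * (s - A))) (uIoo a b) := by
    intro s hs
    simp only [hg (uIoo_of_le hab ▸ hs)]
  refine ⟨((by fun_prop : Continuous _).intervalIntegrable _ _).congr_uIoo heq.symm, ?_⟩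
  rw [integral_congr_uIoo heq, integral_exp_decay α β c A hβ]

theorem integral_Ioi_exp_decay_of_eqOn {g : ℝ → ℝ} {M : ℝ} (hg : EqOn g (fun _ => c) (Ioi M))
    (hβc : 0 < β * c) :
    IntegrableOn (fun s => α * g s * exp (-β * g s * (s - A))) (Ioi M)
    ∧ ∫ s in Ioi M, α * g s * exp (-β * g s * (s - A)) = α / β * exp (-β * c * (M - A)) := by
  have heq : EqOn (fun s => α * g s * exp (-β * g s * (s - A)))
      (fun s => α * c * exp (-β * c * (s - A))) (Ioi M) := by
    intro s hs
    simp only [hg hs]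
  refine ⟨(integrableOn_Ioi_exp_decay α β c A hβc M).congr_fun heq.symm measurableSet_Ioi, ?_⟩
  rw [setIntegral_congr_fun measurableSet_Ioi heq, integral_Ioi_exp_decay α β c A hβc]

end ExpDecay

theorem piecewise_concurrency_compensator_closed_form_general
    (α β A : ℝ) (hβ : 0 < β) (hA : 0 ≤ A)
    (κ : ℕ) (hκ : 1 ≤ κ) (Δ : ℕ → ℝ)
    (hΔ0 : Δ 0 = 0)
    (hΔmono : ∀ l, l + 1 < κ → Δ l < Δ (l + 1))
    (fv : ℕ → ℝ) (hfv : ∀ l, 1 ≤ l → l ≤ κ → 0 < fv l)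
    (f : ℝ → ℝ)
    (hf1 : ∀ l, 1 ≤ l → l < κ → ∀ s, Δ (l - 1) ≤ s → s < Δ l → f s = fv l)
    (hf2 : ∀ s, Δ (κ - 1) ≤ s → f s = fv κ) :
    IntegrableOn (fun s => α * f s * Real.exp (-β * f s * (s - A))) (Set.Ioi A)
    ∧ (∫ s in Set.Ioi A, α * f s * Real.exp (-β * f s * (s - A)))
      = α / β * ((∑ l ∈ Finset.Icc 1 (κ - 1),
          (Real.exp (-β * fv l * max (Δ (l - 1) - A) 0) - Real.exp (-β * fv l * max (Δ l - A) 0)))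
        + Real.exp (-β * fv κ * max (Δ (κ - 1) - A) 0)) := by
  set a : ℕ → ℝ := fun l => max (Δ l) A with ha
  have ha0 : a 0 = A := by simp [ha, hΔ0, hA]
  have haA (l : ℕ) : max (Δ l - A) 0 = a l - A := by rw [ha, ← max_sub_sub_right, sub_self]
  have hf_piece (k : ℕ) (hk : k + 1 < κ) :
      EqOn f (fun _ => fv (k + 1)) (Ioo (a k) (a (k + 1))) := by
    rintro s ⟨hks, hsk⟩
    have hAs : A < s := (le_max_right _ _).trans_lt hks
    exact hf1 (k + 1) (by omega) hk s (by simpa using (le_max_left _ _).trans hks.le)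
      ((lt_max_iff.1 hsk).resolve_right hAs.not_gt)
  have hf_tail : EqOn f (fun _ => fv κ) (Ioi (a (κ - 1))) :=
    fun s hs => hf2 s ((le_max_left _ _).trans (le_of_lt hs))
  have hpiece (k : ℕ) (hk : k < κ - 1) :=
    intervalIntegral_exp_decay_of_eqOn (α := α) (A := A) (a := a k)
      (max_le_max_right A (hΔmono k (by omega)).le) (hf_piece k (by omega)) hβ.ne'
  obtain ⟨htail_int, htail⟩ :=
    integral_Ioi_exp_decay_of_eqOn (α := α) (A := A) hf_tail (mul_pos hβ (hfv κ hκ le_rfl))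
  have hpieces_int (k : ℕ) (hk : k < κ - 1) := (hpiece k hk).1
  have hsplit := integral_Ioi_eq_sum_intervalIntegral_add (a := a) hpieces_int htail_int
  rw [ha0] at hsplit
  refine ⟨ha0 ▸ (IntervalIntegrable.trans_iterate hpieces_int).integrableOn_Ioi htail_int, ?_⟩
  rw [hsplit, htail, Finset.sum_congr rfl fun k hk => (hpiece k (Finset.mem_range.1 hk)).2,
    ← Finset.mul_sum, ← Finset.Ico_add_one_right_eq_Icc, Finset.sum_Ico_eq_sum_range]
  simp only [haA, Nat.sub_add_cancel hκ, add_comm 1, Nat.add_sub_cancel]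
  ring

theorem piecewise_concurrency_compensator_closed_form
    (α β A : ℝ) (hα : 0 < α) (hβ : 0 < β) (hA : 0 ≤ A)
    (κ : ℕ) (hκ : 1 ≤ κ) (Δ : ℕ → ℝ)
    (hΔ0 : Δ 0 = 0)
    (hΔmono : ∀ l, l + 1 < κ → Δ l < Δ (l + 1))
    (fv : ℕ → ℝ) (hfv : ∀ l, 1 ≤ l → l ≤ κ → 0 < fv l)
    (f : ℝ → ℝ)
    (hf1 : ∀ l, 1 ≤ l → l < κ → ∀ s, Δ (l - 1) ≤ s → s < Δ l → f s = fv l)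
    (hf2 : ∀ s, Δ (κ - 1) ≤ s → f s = fv κ) :
    IntegrableOn (fun s => α * f s * Real.exp (-β * f s * (s - A))) (Set.Ioi A)
    ∧ (∫ s in Set.Ioi A, α * f s * Real.exp (-β * f s * (s - A)))
      = α / β * ((∑ l ∈ Finset.Icc 1 (κ - 1),
          (Real.exp (-β * fv l * max (Δ (l - 1) - A) 0) - Real.exp (-β * fv l * max (Δ l - A) 0)))
        + Real.exp (-β * fv κ * max (Δ (κ - 1) - A) 0)) :=
  piecewise_concurrency_compensator_closed_form_general α β A hβ hA κ hκ Δ hΔ0 hΔmono fv hfv f hf1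
    hf2
end

section
/- Let M ≥ 1 and for each conversation m = 1,…,M let 0 = A_{0,m} < A_{1,m} < ⋯ < A_{N_m,m} be its message times, with Σ_{m=1}^{M} N_m ≥ 1. Fix β > 0 and define, for â > 0, L(â) = Σ_{m=1}^{M} Σ_{k=1}^{N_m} log( â β Σ_{i=0}^{k−1} e^{−β(A_{k,m} − A_{i,m})} ) − â Σ_{m=1}^{M} (N_m + 1). Then L is strictly concave on (0, ∞) and attains its unique maximum at â* = ( Σ_{m=1}^{M} N_m ) / ( Σ_{m=1}^{M} (N_m + 1) ). -/
open MeasureTheory Filter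

theorem uhp_responsiveness_mle
    (M : ℕ) (hM : 1 ≤ M) (β : ℝ) (hβ : 0 < β)
    (N : ℕ → ℕ) (A : ℕ → ℕ → ℝ)
    (hA0 : ∀ m ∈ Finset.Icc 1 M, A m 0 = 0)
    (hmono : ∀ m ∈ Finset.Icc 1 M, ∀ i < N m, A m i < A m (i + 1))
    (hN : 1 ≤ ∑ m ∈ Finset.Icc 1 M, N m) :
    StrictConcaveOn ℝ (Set.Ioi 0) (fun c : ℝ =>
        (∑ m ∈ Finset.Icc 1 M, ∑ p ∈ Finset.Icc 1 (N m),
          Real.log (c * β * ∑ i ∈ Finset.range p, Real.exp (-β * (A m p - A m i))))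
        - c * ∑ m ∈ Finset.Icc 1 M, ((N m : ℝ) + 1))
    ∧ 0 < (∑ m ∈ Finset.Icc 1 M, (N m : ℝ)) / (∑ m ∈ Finset.Icc 1 M, ((N m : ℝ) + 1))
    ∧ ∀ c ∈ Set.Ioi (0 : ℝ),
        c ≠ (∑ m ∈ Finset.Icc 1 M, (N m : ℝ)) / (∑ m ∈ Finset.Icc 1 M, ((N m : ℝ) + 1)) →
        ((∑ m ∈ Finset.Icc 1 M, ∑ p ∈ Finset.Icc 1 (N m),
          Real.log (c * β * ∑ i ∈ Finset.range p, Real.exp (-β * (A m p - A m i))))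
        - c * ∑ m ∈ Finset.Icc 1 M, ((N m : ℝ) + 1))
        < ((∑ m ∈ Finset.Icc 1 M, ∑ p ∈ Finset.Icc 1 (N m),
          Real.log (((∑ m ∈ Finset.Icc 1 M, (N m : ℝ)) / (∑ m ∈ Finset.Icc 1 M, ((N m : ℝ) + 1))) * β * ∑ i ∈ Finset.range p, Real.exp (-β * (A m p - A m i))))
        - ((∑ m ∈ Finset.Icc 1 M, (N m : ℝ)) / (∑ m ∈ Finset.Icc 1 M, ((N m : ℝ) + 1))) * ∑ m ∈ Finset.Icc 1 M, ((N m : ℝ) + 1)) := by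
  set n : ℝ := ∑ m ∈ Finset.Icc 1 M, (N m : ℝ) with hn
  set S : ℝ := ∑ m ∈ Finset.Icc 1 M, ((N m : ℝ) + 1) with hS
  have hn1 : (1 : ℝ) ≤ n := by
    rw [hn, ← Nat.cast_sum]
    exact_mod_cast hN
  have hnpos : (0 : ℝ) < n := lt_of_lt_of_le one_pos hn1
  have hSval : S = n + M := by
    rw [hS, hn, Finset.sum_add_distrib, Finset.sum_const, Nat.card_Icc]
    simp
  have hSpos : (0 : ℝ) < S := by
    rw [hSval]; positivity
  set K : ℝ := ∑ m ∈ Finset.Icc 1 M, ∑ p ∈ Finset.Icc 1 (N m),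
      Real.log (β * ∑ i ∈ Finset.range p, Real.exp (-β * (A m p - A m i))) with hK
  have hEpos : ∀ m : ℕ, ∀ p ∈ Finset.Icc 1 (N m),
      (0 : ℝ) < ∑ i ∈ Finset.range p, Real.exp (-β * (A m p - A m i)) := by
    intro m p hp
    have hp1 : 1 ≤ p := (Finset.mem_Icc.1 hp).1
    exact Finset.sum_pos (fun i _ => Real.exp_pos _)
      (Finset.nonempty_range_iff.2 (by omega))
  have heq : ∀ c : ℝ, 0 < c →
      (∑ m ∈ Finset.Icc 1 M, ∑ p ∈ Finset.Icc 1 (N m),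
        Real.log (c * β * ∑ i ∈ Finset.range p, Real.exp (-β * (A m p - A m i))))
      = n * Real.log c + K := by
    intro c hc
    have step : ∀ m ∈ Finset.Icc 1 M,
        (∑ p ∈ Finset.Icc 1 (N m),
          Real.log (c * β * ∑ i ∈ Finset.range p, Real.exp (-β * (A m p - A m i))))
        = (N m : ℝ) * Real.log c
          + ∑ p ∈ Finset.Icc 1 (N m),
              Real.log (β * ∑ i ∈ Finset.range p, Real.exp (-β * (A m p - A m i))) := by
      intro m _
      have : ∀ p ∈ Finset.Icc 1 (N m),
          Real.log (c * β * ∑ i ∈ Finset.range p, Real.exp (-β * (A m p - A m i)))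
          = Real.log c + Real.log (β * ∑ i ∈ Finset.range p, Real.exp (-β * (A m p - A m i))) := by
        intro p hp
        have hE := hEpos m p hp
        rw [mul_assoc, Real.log_mul hc.ne' (by positivity)]
      rw [Finset.sum_congr rfl this, Finset.sum_add_distrib, Finset.sum_const, Nat.card_Icc]
      simp [nsmul_eq_mul]
    rw [Finset.sum_congr rfl step, Finset.sum_add_distrib, ← Finset.sum_mul, hK, hn]
  -- strict concavity of g c = n * log c + K - c * S transfers
  have hglog := strictConcaveOn_log_Ioi
  have hcs : (0 : ℝ) < n / S := div_pos hnpos hSpos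
  refine ⟨⟨convex_Ioi 0, ?_⟩, hcs, ?_⟩
  · intro x hx y hy hxy a b ha hb hab
    have hx' : (0 : ℝ) < x := hx
    have hy' : (0 : ℝ) < y := hy
    have hz : (0 : ℝ) < a * x + b * y := by positivity
    have hlog := hglog.2 hx hy hxy ha hb hab
    simp only [smul_eq_mul] at hlog ⊢
    rw [heq x hx', heq y hy', heq _ hz]
    have hthis := mul_lt_mul_of_pos_left hlog hnpos
    have hK' : a * K + b * K = K := by rw [← add_mul, hab, one_mul]
    nlinarith [hthis, hK']
  · intro c hc hne
    have hc' : (0 : ℝ) < c := hc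
    rw [heq c hc', heq _ hcs]
    have hx : (0 : ℝ) < c / (n / S) := by positivity
    have hx1 : c / (n / S) ≠ 1 := by
      intro h
      exact hne (by field_simp at h; field_simp; linarith)
    have hlog : Real.log (c / (n / S)) < c / (n / S) - 1 :=
      Real.log_lt_sub_one_of_pos hx hx1
    have hdiv : Real.log (c / (n / S)) = Real.log c - Real.log (n / S) :=
      Real.log_div hc'.ne' hcs.ne'
    have hmul := mul_lt_mul_of_pos_left hlog hnpos
    have h1 : n * (c / (n / S)) = c * S := by field_simp
    have h2 : (n / S) * S = n := div_mul_cancel₀ n hSpos.ne'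
    rw [hdiv] at hmul
    nlinarith [hmul, h1, h2]
end
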